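/- If G is a non-elementary block graph that is not tagged, then for every pair of distinct vertices x, y ∈ G, either (x,y) ∈ 𝒫(G) (x and y have a common separating subset in their m-spheres for some m), or the number of vertices distinguishing x and y is at least |V(G)| − 1. -/

import Mathlib

/-- Set of vertices distinguishing `u` and `v`. -/
noncomputable def distinguishers {V : Type*} (G : SimpleGraph V) (u v : V) : Set V :=
  {w | G.dist u w ≠ G.dist v w}

/-- `Dim(G)`: the largest `k` such that every pair of distinct vertices is
distinguished by at least `k` vertices. -/
noncomputable def metricDim {V : Type*} (G : SimpleGraph V) : ℕ :=
  sSup {k | ∀ u v : V, u ≠ v → k ≤ (distinguishers G u v).ncard}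

/-- The boundary `∂N(v,m)`: vertices at distance `m` from `v` having a
neighbor outside `N(v,m)`. -/
def bdry {V : Type*} (G : SimpleGraph V) (v : V) (m : ℕ) : Set V :=
  {w | G.dist v w = m ∧ ∃ x, G.Adj w x ∧ m < G.dist v x}

/-- `v` and `v'` are distinct and have equal (nonempty) `m`-boundary. -/
def eqBdry {V : Type*} (G : SimpleGraph V) (v v' : V) (m : ℕ) : Prop :=
  v ≠ v' ∧ bdry G v m = bdry G v' m ∧ (bdry G v m).Nonempty

noncomputable def etaM {V : Type*} (G : SimpleGraph V) (v v' : V) (m : ℕ) : ℕ :=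
  {w | (G.dist v w ≤ m ∨ G.dist v' w ≤ m) ∧ G.dist v w ≠ G.dist v' w}.ncard

noncomputable def etaG {V : Type*} (G : SimpleGraph V) : ℕ :=
  sInf {n | ∃ (m : ℕ) (v v' : V), eqBdry G v v' m ∧ n = etaM G v v' m}

/-- the diameter of `G`. -/
noncomputable def gdiam {V : Type*} (G : SimpleGraph V) : ℕ :=
  sSup {n | ∃ u v : V, G.dist u v = n}

/-- Reachability in `G` avoiding the vertex set `S`. -/
def ReachOff {V : Type*} (G : SimpleGraph V) (S : Set V) (a b : V) : Prop :=
  ∃ p : G.Walk a b, ∀ x ∈ p.support, x ∉ S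

/-- `S` is a common separating subset of the `m`-spheres of `v` and `v'`. -/
def CommonSepSubset {V : Type*} (G : SimpleGraph V) (v v' : V) (m : ℕ) (S : Set V) : Prop :=
  S ⊆ {w | G.dist v w = m} ∩ {w | G.dist v' w = m} ∧
  (∃ a b : V, a ∉ S ∧ b ∉ S ∧ ¬ ReachOff G S a b) ∧
  (∃ w : V, w ∉ S ∧ ¬ ReachOff G S w v ∧ ¬ ReachOff G S w v')

/-- `(v,v') ∈ 𝒫ₘ(G)`. -/
def memPm {V : Type*} (G : SimpleGraph V) (v v' : V) (m : ℕ) : Prop :=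
  v ≠ v' ∧ ∃ S : Set V, CommonSepSubset G v v' m S

/-- `Sₘ(v,v')`: the union of all common separating subsets of the `m`-spheres. -/
def SmUnion {V : Type*} (G : SimpleGraph V) (v v' : V) (m : ℕ) : Set V :=
  {x | ∃ S : Set V, CommonSepSubset G v v' m S ∧ x ∈ S}

/-- The union of the components of `G \ Sₘ(v,v')` containing neither `v` nor `v'`. -/
def avoidComps {V : Type*} (G : SimpleGraph V) (v v' : V) (m : ℕ) : Set V :=
  {w | w ∉ SmUnion G v v' m ∧ ¬ ReachOff G (SmUnion G v v' m) w v ∧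
    ¬ ReachOff G (SmUnion G v v' m) w v'}

noncomputable def muM {V : Type*} (G : SimpleGraph V) (v v' : V) (m : ℕ) : ℕ :=
  {w | w ∉ avoidComps G v v' m ∧ G.dist v w ≠ G.dist v' w}.ncard

noncomputable def muG {V : Type*} (G : SimpleGraph V) : ℕ :=
  sInf {n | ∃ (m : ℕ) (v v' : V), memPm G v v' m ∧ n = muM G v v' m}

/-- degree as the cardinality of the neighbor set. -/
noncomputable def ndeg {V : Type*} (G : SimpleGraph V) (v : V) : ℕ := (G.neighborSet v).ncard

def IsMajor {V : Type*} (G : SimpleGraph V) (v : V) : Prop := 3 ≤ ndeg G v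

/-- `u` is a terminal vertex of the major vertex `w`. -/
def IsTerminalOf {V : Type*} (G : SimpleGraph V) (u w : V) : Prop :=
  ndeg G u = 1 ∧ IsMajor G w ∧
    ∀ w', IsMajor G w' → w' ≠ w → G.dist u w < G.dist u w'

/-- `G` is a V-graph. -/
def IsVGraph {V : Type*} (G : SimpleGraph V) : Prop :=
  ∃ w, IsMajor G w ∧ {u | IsTerminalOf G u w}.ncard = 2 ∧
    ∀ u, IsTerminalOf G u w → G.Adj u w

/-- `G` is a block graph: connected and every biconnected (2-connected)
set of vertices induces a clique. -/
def IsBlockGraph {V : Type*} (G : SimpleGraph V) : Prop :=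
  G.Connected ∧ ∀ B : Set V, 3 ≤ B.ncard → (G.induce B).Connected →
    (∀ x ∈ B, (G.induce (B \ {x})).Connected) → G.IsClique B

/-- `G` is tagged. -/
def Tagged {V : Type*} (G : SimpleGraph V) : Prop :=
  ∃ K : Set V, G.IsClique K ∧ (∀ K' : Set V, K ⊆ K' → G.IsClique K' → K' = K) ∧
    3 ≤ K.ncard ∧ ∃ u ∈ K, ∃ v ∈ K, u ≠ v ∧
      ndeg G u = K.ncard - 1 ∧ ndeg G v = K.ncard - 1

/-- `G` is neither a complete graph nor a path graph. -/
def NonElementary {V : Type*} (G : SimpleGraph V) : Prop :=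
  G ≠ ⊤ ∧ ∀ n : ℕ, IsEmpty (G ≃g SimpleGraph.pathGraph n)

/-! Let `Z` be the set of vertices equidistant from `x` and `y`. If some `w ∈ Z` has a neighbour
`t` farther from both `x` and `y`, then in a block graph `w` cuts `t` off from `x` and from `y`, so
`{w}` is a common separating subset of the spheres of radius `d(x, w)`.

Otherwise, suppose `|Z| ≥ 2`, which is what fewer than `|V| - 1` distinguishing vertices means.
Every `z ∈ Z` is then simplicial: another vertex of `Z` joins `x` to `y` off `z`, every neighbour
of `z` reaches `x` or `y` off `z`, and in a block graph two neighbours of `z` joined off `z` are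
adjacent. Next, any two vertices of `Z` are adjacent: the first two steps `z, t, r` of a geodesic
from `z` to `z' ∈ Z` can be closed up to a triangle, either because `t ∈ Z` is simplicial or
because `z` reaches `r` off `t` via `y` or `x`. Two adjacent simplicial vertices share their closed
neighbourhood, which is a maximal clique of size at least three, so `G` is tagged. -/

open SimpleGraph

section General

variable {V : Type*} {G : SimpleGraph V} {S : Set V} {a b c t u v w z : V}

lemma ReachOff.symm (h : ReachOff G S a b) : ReachOff G S b a := by
  obtain ⟨p, hp⟩ := h
  exact ⟨p.reverse, fun x hx => hp x (by simpa using hx)⟩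

lemma ReachOff.trans (h₁ : ReachOff G S a b) (h₂ : ReachOff G S b c) : ReachOff G S a c := by
  obtain ⟨p, hp⟩ := h₁
  obtain ⟨q, hq⟩ := h₂
  refine ⟨p.append q, fun x hx => ?_⟩
  rcases Walk.mem_support_append_iff _ _ |>.mp hx with h | h
  exacts [hp x h, hq x h]

lemma SimpleGraph.Connected.dist_le_dist_add_one_of_adj (hconn : G.Connected) (h : G.Adj v w) :
    G.dist u w ≤ G.dist u v + 1 :=
  dist_eq_one_iff_adj.2 h ▸ hconn.dist_triangle

lemma SimpleGraph.Connected.exists_adj_dist_add_one (hconn : G.Connected) (hne : a ≠ b) :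
    ∃ t, G.Adj a t ∧ G.dist t b + 1 = G.dist a b := by
  obtain ⟨p, -, hp⟩ := hconn.exists_path_of_dist a b
  cases p with
  | nil => exact absurd rfl hne
  | @cons _ t _ h q =>
    have h₁ : G.dist a b ≤ G.dist a t + G.dist t b := hconn.dist_triangle
    rw [dist_eq_one_iff_adj.2 h] at h₁
    have h₂ := dist_le q
    simp only [Walk.length_cons] at hp
    exact ⟨t, h, by omega⟩

lemma dist_le_of_adj_of_isClique_neighborSet (hconn : G.Connected)
    (hN : G.IsClique (G.neighborSet z)) (hza : z ≠ a) (hzt : G.Adj z t) :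
    G.dist a t ≤ G.dist a z := by
  obtain ⟨u, hzu, hu⟩ := hconn.exists_adj_dist_add_one hza
  rw [dist_comm (u := u), dist_comm (u := z)] at hu
  by_cases htu : t = u
  · subst htu; omega
  · have := hconn.dist_le_dist_add_one_of_adj (u := a) (hN hzu hzt (Ne.symm htu))
    omega

lemma dist_eq_add_of_not_reachOff (hconn : G.Connected) (h : ¬ ReachOff G {z} a b) :
    G.dist a b = G.dist a z + G.dist z b := by
  classical
  obtain ⟨p, -, hp⟩ := hconn.exists_path_of_dist a b
  have hz : z ∈ p.support := by
    by_contra hz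
    exact h ⟨p, fun x hx hxz => hz (Set.mem_singleton_iff.1 hxz ▸ hx)⟩
  have h₁ := dist_le (p.takeUntil z hz)
  have h₂ := dist_le (p.dropUntil z hz)
  have h₃ : (p.takeUntil z hz).length + (p.dropUntil z hz).length = p.length := by
    rw [← Walk.length_append, Walk.take_spec]
  have h₄ : G.dist a b ≤ G.dist a z + G.dist z b := hconn.dist_triangle
  omega

lemma reachOff_singleton_of_dist_lt (hconn : G.Connected)
    (h : G.dist a b < G.dist a z + G.dist z b) : ReachOff G {z} a b := by
  by_contra h'
  exact h.ne (dist_eq_add_of_not_reachOff hconn h')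

lemma SimpleGraph.Walk.IsCycle.connected_induce_support_diff_singleton {c : G.Walk v v}
    (hc : c.IsCycle) (hu : u ∈ c.support) :
    (G.induce ({x | x ∈ c.support} \ {u})).Connected := by
  classical
  suffices h : ∀ c : G.Walk u u, c.IsCycle →
      (G.induce ({x | x ∈ c.support} \ {u})).Connected by
    have e : {x | x ∈ (c.rotate u hu).support} = {x | x ∈ c.support} := by ext; simp
    exact e ▸ h (c.rotate u hu) ((Walk.isCycle_rotate hu).2 hc)
  rintro (_ | ⟨h, p⟩) hc
  · exact absurd hc Walk.not_isCycle_nil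
  obtain ⟨hp, -⟩ := (Walk.cons_isCycle_iff p h).1 hc
  have hpr := hp.reverse
  have hsupp : ∀ x, x ∈ p.support ↔ x ∈ p.reverse.support := by simp
  generalize p.reverse = q at hpr hsupp
  cases q with
  | nil => exact absurd rfl h.ne
  | cons h' q =>
    have hu : u ∉ q.support := ((Walk.cons_isPath_iff _ _).1 hpr).2
    have e : {x | x ∈ (Walk.cons h p).support} \ {u} = {x | x ∈ q.support} := by
      ext x
      simp only [Walk.support_cons, Set.mem_sdiff, Set.mem_ofPred_eq, List.mem_cons, hsupp,
        Set.mem_singleton_iff]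
      grind
    exact e ▸ q.connected_induce_support

lemma IsBlockGraph.adj_of_reachOff (hG : IsBlockGraph G) (hwa : G.Adj w a) (hwb : G.Adj w b)
    (hab : a ≠ b) (h : ReachOff G {w} a b) : G.Adj a b := by
  classical
  obtain ⟨p, hp⟩ := h
  have hw : w ∉ p.bypass.support := fun hw => hp w (p.support_bypass_subset_support hw) rfl
  let c : G.Walk w w := .cons hwa (p.bypass.concat hwb.symm)
  have hc : c.IsCycle := by
    refine (Walk.cons_isCycle_iff _ _).2 ⟨p.bypass_isPath.concat hw _, fun he => ?_⟩
    simp only [Walk.edges_concat, List.concat_eq_append, List.mem_append, List.mem_singleton] at he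
    rcases he with he | he
    · exact hw (p.bypass.fst_mem_support_of_mem_edges he)
    · rcases Sym2.eq_iff.1 he with ⟨-, rfl⟩ | ⟨-, rfl⟩
      exacts [hwa.ne rfl, hab rfl]
  have hsub : ({w, a, b} : Set V) ⊆ {x | x ∈ c.support} := by
    simp [Set.insert_subset_iff, c]
  have h3 : 3 ≤ ({x | x ∈ c.support} : Set V).ncard := by
    refine le_of_eq_of_le ?_ (Set.ncard_le_ncard hsub c.support.finite_toSet)
    rw [Set.ncard_insert_of_notMem (by simp [hwa.ne, hwb.ne]), Set.ncard_pair hab]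
  exact hG.2 _ h3 c.connected_induce_support
    (fun _ hu => hc.connected_induce_support_diff_singleton hu) (by simp [c]) (by simp [c]) hab

lemma IsBlockGraph.not_reachOff_of_dist_eq_add_one (hG : IsBlockGraph G) (hwa : w ≠ a)
    (hwt : G.Adj w t) (ht : G.dist a t = G.dist a w + 1) : ¬ ReachOff G {w} t a := by
  intro h
  obtain ⟨q, hwq, hq⟩ := hG.1.exists_adj_dist_add_one hwa
  rw [dist_comm, dist_comm (u := w)] at hq
  have hqa : ReachOff G {w} a q := reachOff_singleton_of_dist_lt hG.1 <| by
    rw [dist_eq_one_iff_adj.2 hwq]; omega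
  have htq : t ≠ q := by rintro rfl; omega
  have htq' : G.Adj t q := hG.adj_of_reachOff hwt hwq htq (h.trans hqa)
  have := hG.1.dist_le_dist_add_one_of_adj (u := a) htq'.symm
  omega

lemma tagged_of_adj_of_isClique_neighborSet [Finite V] (hab : G.Adj a b)
    (ha : G.IsClique (G.neighborSet a)) (hb : G.IsClique (G.neighborSet b))
    (hdeg : 1 < ndeg G a) : Tagged G := by
  have key : ∀ {a b}, G.Adj a b → G.IsClique (G.neighborSet a) →
      insert a (G.neighborSet a) ⊆ insert b (G.neighborSet b) := by
    intro a b hab ha v hv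
    rcases hv with rfl | hv
    · exact .inr hab.symm
    · by_cases hvb : v = b
      exacts [.inl hvb, .inr (ha hab hv (Ne.symm hvb))]
  have hK : insert a (G.neighborSet a) = insert b (G.neighborSet b) :=
    (key hab ha).antisymm (key hab.symm hb)
  have hcard : ∀ v, (insert v (G.neighborSet v)).ncard = ndeg G v + 1 := fun v =>
    Set.ncard_insert_of_notMem (by simp) (Set.toFinite _)
  refine ⟨insert a (G.neighborSet a), G.isClique_insert.2 ⟨ha, fun v hv _ => hv⟩, ?_, ?_,
    a, .inl rfl, b, .inr hab, hab.ne, ?_, ?_⟩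
  · intro K hsub hKc
    refine hsub.antisymm' fun v hv => ?_
    by_cases hva : v = a
    exacts [.inl hva, .inr (hKc (hsub (.inl rfl)) hv (Ne.symm hva))]
  · rw [hcard]; omega
  · rw [hcard]; omega
  · rw [hK, hcard]; omega

end General

def IsOutwardEdge {V : Type*} (G : SimpleGraph V) (x y w t : V) : Prop :=
  G.dist x w = G.dist y w ∧ G.Adj w t ∧
    G.dist x t = G.dist x w + 1 ∧ G.dist y t = G.dist y w + 1

section Equidistant

variable {V : Type*} {G : SimpleGraph V} {x y r t w z z' : V}

lemma isOutwardEdge_comm : IsOutwardEdge G y x w t ↔ IsOutwardEdge G x y w t := by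
  unfold IsOutwardEdge
  constructor <;> exact fun ⟨h₁, h₂, h₃, h₄⟩ => ⟨h₁.symm, h₂, h₄, h₃⟩

lemma ne_of_equidistant (hconn : G.Connected) (hxy : x ≠ y) (hz : G.dist x z = G.dist y z) :
    z ≠ x := by
  rintro rfl
  exact hxy (hconn.dist_eq_zero_iff.1 (dist_self ▸ hz).symm).symm

lemma memPm_of_isOutwardEdge (hG : IsBlockGraph G) (hxy : x ≠ y) (h : IsOutwardEdge G x y w t) :
    memPm G x y (G.dist x w) := by
  obtain ⟨hw, hwt, htx, hty⟩ := h
  have hnx := hG.not_reachOff_of_dist_eq_add_one (ne_of_equidistant hG.1 hxy hw) hwt htx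
  have hny := hG.not_reachOff_of_dist_eq_add_one (ne_of_equidistant hG.1 hxy.symm hw.symm) hwt hty
  have ht : t ∉ ({w} : Set V) := hwt.ne.symm
  have hx : x ∉ ({w} : Set V) := (ne_of_equidistant hG.1 hxy hw).symm
  exact ⟨hxy, {w}, Set.singleton_subset_iff.2 ⟨rfl, hw.symm⟩, ⟨t, x, ht, hx, hnx⟩,
    t, ht, hnx, hny⟩

lemma reachOff_of_equidistant (hconn : G.Connected) (hno : ∀ w t, ¬ IsOutwardEdge G x y w t)
    (hz : G.dist x z = G.dist y z) (hz' : G.dist x z' = G.dist y z') (hne : z' ≠ z) :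
    ReachOff G {z} z' x := by
  by_contra h
  have hsplit := dist_eq_add_of_not_reachOff hconn h
  obtain ⟨t, hzt, ht⟩ := hconn.exists_adj_dist_add_one hne.symm
  have farther : ∀ a, G.dist a z' = G.dist a z + G.dist z z' → G.dist a t = G.dist a z + 1 := by
    intro a ha
    have h₁ : G.dist a z' ≤ G.dist a t + G.dist t z' := hconn.dist_triangle
    have h₂ := hconn.dist_le_dist_add_one_of_adj (u := a) hzt
    omega
  rw [dist_comm (u := z'), dist_comm (u := z'), dist_comm (u := z) (v := x)] at hsplit
  exact hno z t ⟨hz, hzt, farther x (by omega), farther y (by omega)⟩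

lemma reachOff_or_reachOff_of_adj (hconn : G.Connected)
    (hno : ∀ w t, ¬ IsOutwardEdge G x y w t) (hz : G.dist x z = G.dist y z) (hzt : G.Adj z t) :
    ReachOff G {z} t x ∨ ReachOff G {z} t y := by
  by_contra! h
  have hx := dist_eq_add_of_not_reachOff hconn h.1
  have hy := dist_eq_add_of_not_reachOff hconn h.2
  rw [dist_comm (u := t), dist_comm (u := z), dist_eq_one_iff_adj.2 hzt.symm] at hx hy
  exact hno z t ⟨hz, hzt, by omega, by omega⟩

lemma isClique_neighborSet_of_equidistant (hG : IsBlockGraph G)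
    (hno : ∀ w t, ¬ IsOutwardEdge G x y w t) (hz : G.dist x z = G.dist y z)
    (hz' : G.dist x z' = G.dist y z') (hne : z' ≠ z) : G.IsClique (G.neighborSet z) := by
  have hno' : ∀ w t, ¬ IsOutwardEdge G y x w t := fun w t h => hno w t (isOutwardEdge_comm.1 h)
  have hxy : ReachOff G {z} x y :=
    (reachOff_of_equidistant hG.1 hno hz hz' hne).symm.trans
      (reachOff_of_equidistant hG.1 hno' hz.symm hz'.symm hne)
  have toX : ∀ s, G.Adj z s → ReachOff G {z} s x := fun s hs =>
    (reachOff_or_reachOff_of_adj hG.1 hno hz hs).elim id (·.trans hxy.symm)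
  exact fun s hs t ht hst => hG.adj_of_reachOff hs ht hst ((toX s hs).trans (toX t ht).symm)

/-- The route `z → y → z' → r` misses `t`, each leg being a geodesic. -/
lemma reachOff_of_dist_lt_of_dist_eq (hconn : G.Connected) (hz' : G.dist x z' = G.dist y z')
    (htx : G.dist x t < G.dist y t) (hty : G.dist y t = G.dist y z) (hzt : G.Adj z t)
    (htr : G.Adj t r) (hr : G.dist r z' + 1 = G.dist t z') : ReachOff G {t} z r := by
  have hxz' : G.dist x z' ≤ G.dist x t + G.dist t z' := hconn.dist_triangle
  have hzy : ReachOff G {t} z y := reachOff_singleton_of_dist_lt hconn <| by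
    rw [dist_eq_one_iff_adj.2 hzt, dist_comm (u := t), dist_comm (u := z)]; omega
  have hyz' : ReachOff G {t} y z' := reachOff_singleton_of_dist_lt hconn (by omega)
  have hz'r : ReachOff G {t} z' r := reachOff_singleton_of_dist_lt hconn <| by
    rw [dist_eq_one_iff_adj.2 htr, dist_comm (u := z'), dist_comm (u := z') (v := t)]; omega
  exact hzy.trans (hyz'.trans hz'r)

lemma adj_of_equidistant (hG : IsBlockGraph G) (hxy : x ≠ y)
    (hno : ∀ w t, ¬ IsOutwardEdge G x y w t) (hz : G.dist x z = G.dist y z)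
    (hz' : G.dist x z' = G.dist y z') (hne : z ≠ z') : G.Adj z z' := by
  have hconn := hG.1
  by_contra hnadj
  have hg := hconn.one_lt_dist_of_ne_of_not_adj hne hnadj
  -- `z, t, r` start a geodesic to `z'`; closing the triangle `z t r` would shorten it
  obtain ⟨t, hzt, ht⟩ := hconn.exists_adj_dist_add_one hne
  have htz' : t ≠ z' := by rintro rfl; simp only [dist_self] at ht; omega
  obtain ⟨r, htr, hr⟩ := hconn.exists_adj_dist_add_one htz'
  suffices hzr : G.Adj z r by
    have := hconn.dist_le_dist_add_one_of_adj (u := z') hzr.symm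
    rw [dist_comm (u := z'), dist_comm (u := z')] at this
    omega
  have hzr : z ≠ r := by rintro rfl; omega
  have hN := isClique_neighborSet_of_equidistant hG hno hz hz' hne.symm
  have hxt := dist_le_of_adj_of_isClique_neighborSet hconn hN (ne_of_equidistant hconn hxy hz) hzt
  have hyt := dist_le_of_adj_of_isClique_neighborSet hconn hN
    (ne_of_equidistant hconn hxy.symm hz.symm) hzt
  have hxt' := hconn.dist_le_dist_add_one_of_adj (u := x) hzt.symm
  have hyt' := hconn.dist_le_dist_add_one_of_adj (u := y) hzt.symm
  have hnot : ¬ (G.dist x t < G.dist x z ∧ G.dist y t < G.dist y z) := fun ⟨h₁, h₂⟩ =>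
    hno t z ⟨by omega, hzt.symm, by omega, by omega⟩
  rcases (by omega : G.dist x t < G.dist y t ∧ G.dist y t = G.dist y z ∨
      G.dist y t < G.dist x t ∧ G.dist x t = G.dist x z ∨ G.dist x t = G.dist y t) with
    ⟨htx, hty⟩ | ⟨hty, htx⟩ | hteq
  · exact hG.adj_of_reachOff hzt.symm htr hzr
      (reachOff_of_dist_lt_of_dist_eq hconn hz' htx hty hzt htr hr)
  · exact hG.adj_of_reachOff hzt.symm htr hzr
      (reachOff_of_dist_lt_of_dist_eq hconn hz'.symm hty htx hzt htr hr)
  · exact isClique_neighborSet_of_equidistant hG hno hteq hz hzt.ne hzt.symm htr hzr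

lemma tagged_of_equidistant [Finite V] (hG : IsBlockGraph G) (hxy : x ≠ y)
    (hno : ∀ w t, ¬ IsOutwardEdge G x y w t) (hz : G.dist x z = G.dist y z)
    (hz' : G.dist x z' = G.dist y z') (hne : z ≠ z') : Tagged G := by
  have hconn := hG.1
  obtain ⟨u, hzu, hu⟩ := hconn.exists_adj_dist_add_one (ne_of_equidistant hconn hxy hz)
  obtain ⟨v, hzv, hv⟩ :=
    hconn.exists_adj_dist_add_one (ne_of_equidistant hconn hxy.symm hz.symm)
  have huv : u ≠ v := by
    rintro rfl
    rw [dist_comm (u := u), dist_comm (u := z)] at hu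
    rw [dist_comm (u := u), dist_comm (u := z)] at hv
    exact hno u z ⟨by omega, hzu.symm, by omega, by omega⟩
  have hdeg : 1 < ndeg G z := (Set.one_lt_ncard_iff (Set.toFinite _)).2 ⟨u, v, hzu, hzv, huv⟩
  exact tagged_of_adj_of_isClique_neighborSet (adj_of_equidistant hG hxy hno hz hz' hne)
    (isClique_neighborSet_of_equidistant hG hno hz hz' hne.symm)
    (isClique_neighborSet_of_equidistant hG hno hz' hz hne) hdeg

end Equidistant

lemma exists_ne_equidistant_of_ncard_distinguishers_lt {V : Type*} [Fintype V]
    {G : SimpleGraph V} {x y : V}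
    (h : (distinguishers G x y).ncard < Fintype.card V - 1) :
    ∃ z z', z ≠ z' ∧ G.dist x z = G.dist y z ∧ G.dist x z' = G.dist y z' := by
  have hcompl : (distinguishers G x y)ᶜ = {w | G.dist x w = G.dist y w} := by
    ext w; simp [distinguishers]
  have hsum := Set.ncard_add_ncard_compl (distinguishers G x y)
  rw [Nat.card_eq_fintype_card, hcompl] at hsum
  obtain ⟨z, z', hz, hz', hne⟩ := (Set.one_lt_ncard_iff (Set.toFinite _)).1 (by omega :
    1 < {w | G.dist x w = G.dist y w}.ncard)
  exact ⟨z, z', hne, hz, hz'⟩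

theorem stmt17_general {V : Type*} [Fintype V] (G : SimpleGraph V)
    (hG : IsBlockGraph G) (hnt : ¬ Tagged G) :
    ∀ x y : V, x ≠ y →
      (∃ m : ℕ, memPm G x y m) ∨
        Fintype.card V - 1 ≤ (distinguishers G x y).ncard := by
  intro x y hxy
  by_cases hout : ∃ w t, IsOutwardEdge G x y w t
  · obtain ⟨w, t, h⟩ := hout
    exact .inl ⟨_, memPm_of_isOutwardEdge hG hxy h⟩
  refine .inr (not_lt.1 fun hlt => hnt ?_)
  obtain ⟨z, z', hne, hz, hz'⟩ := exists_ne_equidistant_of_ncard_distinguishers_lt hlt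
  exact tagged_of_equidistant hG hxy (fun w t h => hout ⟨w, t, h⟩) hz hz' hne

theorem stmt17 {V : Type*} [Fintype V] (G : SimpleGraph V)
    (hG : IsBlockGraph G) (hne : NonElementary G) (hnt : ¬ Tagged G) :
    ∀ x y : V, x ≠ y →
      (∃ m : ℕ, memPm G x y m) ∨
        Fintype.card V - 1 ≤ (distinguishers G x y).ncard :=
  stmt17_general G hG hnt
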